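/- arXiv:1807.07881 — 4 statements merged into one kernel-verified Lean document; each statement's English description precedes it below -/
import Mathlib

section
/- (Rokhlin Lemma) Let Ω be a separable metric space, (Ω, B(Ω), μ, T) a measure-preserving dynamical system with T aperiodic. Then for all d ∈ ℕ and ε > 0 there exists a set B ∈ B(Ω) such that the sets B, T^{-1}(B), ..., T^{-(d-1)}(B) are pairwise disjoint and μ(B) ≥ (1-ε)/d. -/
open MeasureTheory Real Filter
open scoped symmDiff

noncomputable def shEntropy {α I : Type*} [MeasurableSpace α] (μ : Measure α) (P : I → Set α) : ℝ :=
  ∑' i, Real.negMulLog (μ (P i)).toReal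

def IsPartitionOf {I : Type*} (Ω : Set ℝ) (P : I → Set ℝ) : Prop :=
  (Pairwise fun i j => Disjoint (P i) (P j)) ∧ (⋃ i, P i) = Ω

def IsIntervalIn (Ω A : Set ℝ) : Prop :=
  A ⊆ Ω ∧ ∀ x ∈ A, ∀ z ∈ A, ∀ y ∈ Ω, x ≤ y → y ≤ z → y ∈ A

def IsMonotonyPartition {I : Type*} (Ω : Set ℝ) (T : ℝ → ℝ) (M : I → Set ℝ) : Prop :=
  IsPartitionOf Ω M ∧ ∀ i, IsIntervalIn Ω (M i) ∧ (MonotoneOn T (M i) ∨ StrictAntiOn T (M i))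

def multiCell {I : Type*} (T : ℝ → ℝ) (P : I → Set ℝ) (n : ℕ) (a : Fin n → I) : Set ℝ :=
  ⋂ k : Fin n, T^[(k : ℕ)] ⁻¹' P (a k)

def ordCell (Ω : Set ℝ) (T : ℝ → ℝ) (n : ℕ) (pp : Equiv.Perm (Fin n)) : Set ℝ :=
  {ω ∈ Ω | ∀ k l : Fin n, k ≤ l → T^[((pp k : Fin n) : ℕ)] ω ≤ T^[((pp l : Fin n) : ℕ)] ω}

noncomputable def entropyRate {I : Type*} (μ : Measure ℝ) (T : ℝ → ℝ) (P : I → Set ℝ) : ℝ :=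
  liminf (fun n : ℕ => shEntropy μ (multiCell T P n) / (n : ℝ)) atTop

noncomputable def permEntropy (Ω : Set ℝ) (μ : Measure ℝ) (T : ℝ → ℝ) : ℝ :=
  liminf (fun n : ℕ => shEntropy μ (ordCell Ω T n) / (n : ℝ)) atTop

noncomputable def ksEntropy (Ω : Set ℝ) (μ : Measure ℝ) (T : ℝ → ℝ) : ℝ :=
  sSup {h : ℝ | ∃ P : ℕ → Set ℝ, IsPartitionOf Ω P ∧ (∀ i, MeasurableSet (P i)) ∧
    (Summable fun i => Real.negMulLog (μ (P i)).toReal) ∧ h = entropyRate μ T P}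

def Aperiodic (μ : Measure ℝ) (T : ℝ → ℝ) : Prop :=
  μ {ω | ∃ t, 1 ≤ t ∧ T^[t] ω = ω} = 0

/-!
Aperiodicity and second countability put almost every point in a basic open set `U` none of whose
points returns to `U` within `N` steps. Gluing countably many such sets, discarding each time what
is already swept out, gives a set `C` whose first `N` preimages are almost disjoint, so that
`μ C ≤ 1 / N`, and which almost every orbit enters. The base `B` consists of the points whose first
entry time into `C` is a positive multiple of `d`: its first `d` preimages are disjoint, and together
with the points entering `C` before time `d`, of measure at most `d μ C`, they cover almost
everything.
-/

open scoped ENNReal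

namespace Rokhlin

section

variable {X : Type*} {T : X → X}

def sweep (T : X → X) (C : Set X) : Set X := ⋃ k : ℕ, T^[k] ⁻¹' C

lemma preimage_iterate_subset_sweep (T : X → X) (C : Set X) (k : ℕ) :
    T^[k] ⁻¹' C ⊆ sweep T C :=
  Set.subset_iUnion (fun k => T^[k] ⁻¹' C) k

lemma subset_sweep (T : X → X) (C : Set X) : C ⊆ sweep T C :=
  preimage_iterate_subset_sweep T C 0

lemma sweep_mono {C D : Set X} (h : C ⊆ D) : sweep T C ⊆ sweep T D :=
  Set.iUnion_mono fun _ => Set.preimage_mono h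

lemma preimage_iterate_sweep_subset (T : X → X) (C : Set X) (k : ℕ) :
    T^[k] ⁻¹' sweep T C ⊆ sweep T C := by
  intro x hx
  obtain ⟨j, hj⟩ := Set.mem_iUnion.1 hx
  refine Set.mem_iUnion.2 ⟨j + k, ?_⟩
  simpa [Function.iterate_add_apply] using hj

lemma subset_sweep_union_diff_sweep (T : X → X) (C D : Set X) :
    D ⊆ sweep T (C ∪ (D \ sweep T C)) := by
  intro x hx
  by_cases hxC : x ∈ sweep T C
  · exact sweep_mono Set.subset_union_left hxC
  · exact subset_sweep T _ (Or.inr ⟨hx, hxC⟩)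

variable [MeasurableSpace X] {μ : Measure X}

lemma measurableSet_sweep (hT : Measurable T) {C : Set X} (hC : MeasurableSet C) :
    MeasurableSet (sweep T C) :=
  MeasurableSet.iUnion fun k => hT.iterate k hC

/-- `sweep T C` is mapped into itself by `T⁻¹` and keeps its measure, so almost no point of it
leaves it. -/
lemma measure_inter_preimage_iterate_compl_sweep [IsFiniteMeasure μ]
    (hT : MeasurePreserving T μ μ) {C : Set X} (hC : MeasurableSet C) (k : ℕ) :
    μ (C ∩ T^[k] ⁻¹' (sweep T C)ᶜ) = 0 := by
  have hS := measurableSet_sweep hT.measurable hC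
  have hdiff : μ (sweep T C \ T^[k] ⁻¹' sweep T C) = 0 := by
    rw [measure_sdiff (preimage_iterate_sweep_subset T C k)
      (hT.measurable.iterate k hS).nullMeasurableSet (measure_ne_top _ _),
      (hT.iterate k).measure_preimage hS.nullMeasurableSet, tsub_self]
  refine measure_mono_null ?_ hdiff
  exact fun x hx => ⟨subset_sweep T C hx.1, hx.2⟩

def IsTowerBase (μ : Measure X) (T : X → X) (N : ℕ) (C : Set X) : Prop :=
  MeasurableSet C ∧ ∀ k, 0 < k → k < N → μ (C ∩ T^[k] ⁻¹' C) = 0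

lemma isTowerBase_empty (N : ℕ) : IsTowerBase μ T N ∅ :=
  ⟨MeasurableSet.empty, fun _ _ _ => by simp⟩

lemma IsTowerBase.union_diff_sweep [IsFiniteMeasure μ] (hT : MeasurePreserving T μ μ) {N : ℕ}
    {C D : Set X} (hC : IsTowerBase μ T N C) (hD : IsTowerBase μ T N D) :
    IsTowerBase μ T N (C ∪ (D \ sweep T C)) := by
  refine ⟨hC.1.union (hD.1.diff (measurableSet_sweep hT.measurable hC.1)), fun k hk hkN => ?_⟩
  have hsub : (C ∪ (D \ sweep T C)) ∩ T^[k] ⁻¹' (C ∪ (D \ sweep T C)) ⊆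
      (C ∩ T^[k] ⁻¹' C) ∪ (C ∩ T^[k] ⁻¹' (sweep T C)ᶜ) ∪ (D ∩ T^[k] ⁻¹' D) := by
    rintro x ⟨hx | hx, hTx | hTx⟩
    · exact Or.inl (Or.inl ⟨hx, hTx⟩)
    · exact Or.inl (Or.inr ⟨hx, hTx.2⟩)
    · exact absurd (preimage_iterate_subset_sweep T C k hTx) hx.2
    · exact Or.inr ⟨hx.1, hTx.1⟩
  refine measure_mono_null hsub (measure_union_null (measure_union_null ?_ ?_) ?_)
  · exact hC.2 k hk hkN
  · exact measure_inter_preimage_iterate_compl_sweep hT hC.1 k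
  · exact hD.2 k hk hkN

lemma isTowerBase_iUnion {N : ℕ} {C : ℕ → Set X} (hmono : Monotone C)
    (h : ∀ n, IsTowerBase μ T N (C n)) : IsTowerBase μ T N (⋃ n, C n) := by
  refine ⟨MeasurableSet.iUnion fun n => (h n).1, fun k hk hkN => ?_⟩
  have hsub : (⋃ n, C n) ∩ T^[k] ⁻¹' (⋃ n, C n) ⊆
      ⋃ n, ⋃ m, C (max n m) ∩ T^[k] ⁻¹' C (max n m) := by
    rintro x ⟨hx, hTx⟩
    obtain ⟨n, hn⟩ := Set.mem_iUnion.1 hx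
    obtain ⟨m, hm⟩ := Set.mem_iUnion.1 hTx
    exact Set.mem_iUnion₂.2 ⟨n, m, hmono (le_max_left n m) hn, hmono (le_max_right n m) hm⟩
  exact measure_mono_null hsub
    (measure_iUnion_null fun n => measure_iUnion_null fun m => (h (max n m)).2 k hk hkN)

lemma exists_isTowerBase_subset_sweep_of_nat [IsFiniteMeasure μ] (hT : MeasurePreserving T μ μ)
    {N : ℕ} {A : ℕ → Set X} (hA : ∀ n, IsTowerBase μ T N (A n)) :
    ∃ C, IsTowerBase μ T N C ∧ ∀ n, A n ⊆ sweep T C := by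
  let C : ℕ → Set X := fun n => Nat.rec ∅ (fun n Cn => Cn ∪ (A n \ sweep T Cn)) n
  have hC : ∀ n, IsTowerBase μ T N (C n) := by
    intro n
    induction n with
    | zero => exact isTowerBase_empty N
    | succ n ih => exact ih.union_diff_sweep hT (hA n)
  have hmono : Monotone C := monotone_nat_of_le_succ fun n => Set.subset_union_left
  refine ⟨⋃ n, C n, isTowerBase_iUnion hmono hC, fun n => ?_⟩
  exact (subset_sweep_union_diff_sweep T (C n) (A n)).trans
    (sweep_mono (Set.subset_iUnion C (n + 1)))

lemma exists_isTowerBase_subset_sweep [IsFiniteMeasure μ] (hT : MeasurePreserving T μ μ)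
    {N : ℕ} {ι : Type*} [Countable ι] {A : ι → Set X} (hA : ∀ i, IsTowerBase μ T N (A i)) :
    ∃ C, IsTowerBase μ T N C ∧ ∀ i, A i ⊆ sweep T C := by
  rcases isEmpty_or_nonempty ι with hι | hι
  · exact ⟨∅, isTowerBase_empty N, fun i => isEmptyElim i⟩
  obtain ⟨f, hf⟩ := exists_surjective_nat ι
  obtain ⟨C, hC, hAC⟩ := exists_isTowerBase_subset_sweep_of_nat hT fun n => hA (f n)
  exact ⟨C, hC, hf.forall.2 hAC⟩

end

lemma exists_isTowerBase_measure_compl_sweep_eq_zero {X : Type*} [TopologicalSpace X]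
    [T1Space X] [SecondCountableTopology X] [MeasurableSpace X] [OpensMeasurableSpace X]
    {μ : Measure X} [IsFiniteMeasure μ] {T : X → X} (hT : MeasurePreserving T μ μ)
    (hap : μ {ω | ∃ t, 1 ≤ t ∧ T^[t] ω = ω} = 0) (N : ℕ) :
    ∃ C, IsTowerBase μ T N C ∧ μ (sweep T C)ᶜ = 0 := by
  obtain ⟨b, hbc, -, hb⟩ := TopologicalSpace.exists_countable_basis X
  have := hbc.to_subtype
  let A : b → Set X := fun U => U ∩ ⋂ k ∈ Set.Ioo 0 N, T^[k] ⁻¹' (U : Set X)ᶜ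
  have hA : ∀ U, IsTowerBase μ T N (A U) := by
    intro U
    have hU := (hb.isOpen U.2).measurableSet
    refine ⟨hU.inter (.biInter (Set.to_countable _) fun k _ => hT.measurable.iterate k hU.compl),
      fun k hk hkN => ?_⟩
    refine measure_mono_null (fun x ⟨hx, hTx⟩ => ?_) measure_empty
    exact Set.mem_iInter₂.1 hx.2 k ⟨hk, hkN⟩ hTx.1
  obtain ⟨C, hC, hAC⟩ := exists_isTowerBase_subset_sweep hT hA
  refine ⟨C, hC, measure_mono_null (fun x hx => ?_) hap⟩
  by_contra hper
  have hxS : x ∉ (fun k => T^[k] x) '' Set.Ioo 0 N := fun ⟨k, hk, hkx⟩ => hper ⟨k, hk.1, hkx⟩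
  obtain ⟨U, hUb, hxU, hUS⟩ := hb.exists_subset_of_mem_open hxS
    ((Set.finite_Ioo 0 N).image _).isClosed.isOpen_compl
  refine hx (hAC ⟨U, hUb⟩ ⟨hxU, Set.mem_iInter₂.2 fun k hk hkU => hUS hkU ?_⟩)
  exact Set.mem_image_of_mem _ hk

section

variable {X : Type*} {T : X → X}

def firstEntry (T : X → X) (C : Set X) (k : ℕ) : Set X :=
  {x | T^[k] x ∈ C ∧ ∀ i < k, T^[i] x ∉ C}

lemma iterate_mem_firstEntry {C : Set X} {k m : ℕ} (hm : m ≤ k) {x : X}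
    (hx : x ∈ firstEntry T C k) : T^[m] x ∈ firstEntry T C (k - m) := by
  refine ⟨?_, fun i hi => ?_⟩
  · rw [← Function.iterate_add_apply, Nat.sub_add_cancel hm]
    exact hx.1
  · rw [← Function.iterate_add_apply]
    exact hx.2 (i + m) (by omega)

lemma eq_of_mem_firstEntry {C : Set X} {k l : ℕ} {x : X} (hk : x ∈ firstEntry T C k)
    (hl : x ∈ firstEntry T C l) : k = l := by
  by_contra hne
  rcases Nat.lt_or_gt_of_ne hne with h | h
  · exact hl.2 k h hk.1
  · exact hk.2 l h hl.1

lemma sweep_subset_iUnion_firstEntry (T : X → X) (C : Set X) :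
    sweep T C ⊆ ⋃ k, firstEntry T C k := by
  intro x hx
  classical
  have hex : ∃ k, T^[k] x ∈ C := Set.mem_iUnion.1 hx
  exact Set.mem_iUnion.2 ⟨Nat.find hex, Nat.find_spec hex, fun i hi => Nat.find_min hex hi⟩

def base (T : X → X) (C : Set X) (d : ℕ) : Set X :=
  ⋃ (k : ℕ) (_ : d ∣ k ∧ k ≠ 0), firstEntry T C k

lemma disjoint_base_preimage_iterate {C : Set X} {d m : ℕ} (hm : 0 < m) (hmd : m < d) :
    Disjoint (base T C d) (T^[m] ⁻¹' base T C d) := by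
  refine Set.disjoint_left.2 fun x hx hTx => ?_
  obtain ⟨k, ⟨hdk, hk0⟩, hxk⟩ := Set.mem_iUnion₂.1 hx
  obtain ⟨l, ⟨hdl, -⟩, hxl⟩ := Set.mem_iUnion₂.1 hTx
  have hmk : m ≤ k := hmd.le.trans (Nat.le_of_dvd (Nat.pos_of_ne_zero hk0) hdk)
  have hkl : k - m = l := eq_of_mem_firstEntry (iterate_mem_firstEntry hmk hxk) hxl
  have hdm : d ∣ m := by
    have := Nat.dvd_sub hdk hdl
    rwa [← hkl, Nat.sub_sub_self hmk] at this
  exact hm.ne' (Nat.eq_zero_of_dvd_of_lt hdm hmd)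

lemma disjoint_preimage_iterate_of_disjoint_preimage_iterate {B : Set X} {d : ℕ}
    (h : ∀ m, 0 < m → m < d → Disjoint B (T^[m] ⁻¹' B)) {i j : ℕ} (hi : i < d) (hj : j < d)
    (hij : i ≠ j) : Disjoint (T^[i] ⁻¹' B) (T^[j] ⁻¹' B) := by
  wlog hlt : i < j generalizing i j
  · exact (this hj hi hij.symm (by omega)).symm
  have hshift : T^[i] ⁻¹' (T^[j - i] ⁻¹' B) = T^[j] ⁻¹' B := by
    rw [← Set.preimage_comp, ← Function.iterate_add, Nat.sub_add_cancel hlt.le]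
  rw [← hshift]
  exact (h (j - i) (by omega) (by omega)).preimage _

lemma sweep_subset_preimage_base_union_firstEntry (T : X → X) (C : Set X) {d : ℕ} (hd : 0 < d) :
    sweep T C ⊆ (⋃ m ∈ Finset.range d, T^[m] ⁻¹' base T C d) ∪
      ⋃ k ∈ Finset.range d, firstEntry T C k := by
  intro x hx
  obtain ⟨k, hxk⟩ := Set.mem_iUnion.1 (sweep_subset_iUnion_firstEntry T C hx)
  rcases Nat.lt_or_ge k d with hkd | hdk
  · exact Or.inr (Set.mem_biUnion (Finset.mem_range.2 hkd) hxk)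
  refine Or.inl (Set.mem_biUnion (Finset.mem_range.2 (Nat.mod_lt k hd)) ?_)
  refine Set.mem_iUnion₂.2 ⟨k - k % d, ⟨Nat.dvd_sub_mod k, ?_⟩, ?_⟩
  · have := Nat.mod_lt k hd
    omega
  · exact iterate_mem_firstEntry (Nat.mod_le k d) hxk

variable [MeasurableSpace X] {μ : Measure X}

lemma measurableSet_firstEntry (hT : Measurable T) {C : Set X} (hC : MeasurableSet C) (k : ℕ) :
    MeasurableSet (firstEntry T C k) := by
  have : firstEntry T C k = T^[k] ⁻¹' C ∩ ⋂ i ∈ Set.Iio k, (T^[i] ⁻¹' C)ᶜ := by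
    ext x
    simp [firstEntry]
  rw [this]
  exact (hT.iterate k hC).inter (.biInter (Set.to_countable _) fun i _ => (hT.iterate i hC).compl)

lemma measurableSet_base (hT : Measurable T) {C : Set X} (hC : MeasurableSet C) (d : ℕ) :
    MeasurableSet (base T C d) :=
  .iUnion fun k => .iUnion fun _ => measurableSet_firstEntry hT hC k

lemma measure_sweep_le (hT : MeasurePreserving T μ μ) {C : Set X} (hC : MeasurableSet C)
    {d : ℕ} (hd : 0 < d) : μ (sweep T C) ≤ d * μ (base T C d) + d * μ C := by
  have hB := measurableSet_base hT.measurable hC d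
  calc μ (sweep T C)
      ≤ μ (⋃ m ∈ Finset.range d, T^[m] ⁻¹' base T C d) +
          μ (⋃ k ∈ Finset.range d, firstEntry T C k) :=
        (measure_mono (sweep_subset_preimage_base_union_firstEntry T C hd)).trans
          (measure_union_le _ _)
    _ ≤ ∑ m ∈ Finset.range d, μ (T^[m] ⁻¹' base T C d) +
          ∑ k ∈ Finset.range d, μ (T^[k] ⁻¹' C) := by
        gcongr
        · exact measure_biUnion_finset_le _ _
        · refine (measure_biUnion_finset_le _ _).trans (Finset.sum_le_sum fun k _ => ?_)
          exact measure_mono fun x hx => hx.1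
    _ = d * μ (base T C d) + d * μ C := by
        simp only [(hT.iterate _).measure_preimage hB.nullMeasurableSet,
          (hT.iterate _).measure_preimage hC.nullMeasurableSet, Finset.sum_const,
          Finset.card_range, nsmul_eq_mul]

lemma IsTowerBase.natCast_mul_measure_le (hT : MeasurePreserving T μ μ) {N : ℕ} {C : Set X}
    (hC : IsTowerBase μ T N C) : N * μ C ≤ μ Set.univ := by
  have hdisj : (↑(Finset.range N) : Set ℕ).Pairwise
      (Function.onFun (AEDisjoint μ) fun i => T^[i] ⁻¹' C) := by
    intro i hi j hj hij
    wlog hlt : i < j generalizing i j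
    · exact (this hj hi hij.symm (by omega)).symm
    have hshift : T^[i] ⁻¹' (C ∩ T^[j - i] ⁻¹' C) = T^[i] ⁻¹' C ∩ T^[j] ⁻¹' C := by
      rw [Set.preimage_inter, ← Set.preimage_comp, ← Function.iterate_add,
        Nat.sub_add_cancel hlt.le]
    have hjN : j < N := Finset.mem_range.1 hj
    change μ (T^[i] ⁻¹' C ∩ T^[j] ⁻¹' C) = 0
    rw [← hshift]
    exact (hT.iterate i).quasiMeasurePreserving.preimage_null (hC.2 (j - i) (by omega) (by omega))
  calc (N : ℝ≥0∞) * μ C = ∑ i ∈ Finset.range N, μ (T^[i] ⁻¹' C) := by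
        simp only [(hT.iterate _).measure_preimage hC.1.nullMeasurableSet, Finset.sum_const,
          Finset.card_range, nsmul_eq_mul]
    _ = μ (⋃ i ∈ Finset.range N, T^[i] ⁻¹' C) :=
        (measure_biUnion_finset₀ hdisj fun i _ =>
          (hT.measurable.iterate i hC.1).nullMeasurableSet).symm
    _ ≤ μ Set.univ := measure_mono (Set.subset_univ _)

end

lemma ofReal_one_sub_div_le {b c : ℝ≥0∞} (hb : b ≠ ∞) (hc : c ≠ ∞) {d N : ℕ} {ε : ℝ}
    (hd : 0 < d) (hε : 0 < ε) (hN : d / ε ≤ N) (hcover : 1 ≤ d * b + d * c) (hsmall : N * c ≤ 1) :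
    ENNReal.ofReal ((1 - ε) / d) ≤ b := by
  lift b to NNReal using hb
  lift c to NNReal using hc
  have hcover' : (1 : ℝ) ≤ d * b + d * c := by exact_mod_cast hcover
  have hsmall' : (N : ℝ) * c ≤ 1 := by exact_mod_cast hsmall
  have hdN : (d : ℝ) ≤ ε * N := by rwa [div_le_iff₀' hε] at hN
  have hdc : (d : ℝ) * c ≤ ε := by nlinarith [c.coe_nonneg]
  refine ENNReal.ofReal_le_of_le_toReal ?_
  rw [ENNReal.coe_toReal, div_le_iff₀ (by exact_mod_cast hd)]
  linarith

end Rokhlin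

theorem stmt3 {X : Type*} [MetricSpace X] [TopologicalSpace.SeparableSpace X]
    [MeasurableSpace X] [BorelSpace X]
    (μ : Measure X) [IsProbabilityMeasure μ] (T : X → X)
    (hT : MeasurePreserving T μ μ)
    (hap : μ {ω | ∃ t, 1 ≤ t ∧ T^[t] ω = ω} = 0)
    (d : ℕ) (hd : 0 < d) (ε : ℝ) (hε : 0 < ε) :
    ∃ B : Set X, MeasurableSet B ∧
      (∀ i j, i < d → j < d → i ≠ j → Disjoint (T^[i] ⁻¹' B) (T^[j] ⁻¹' B)) ∧
      ENNReal.ofReal ((1 - ε) / d) ≤ μ B := by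
  open Rokhlin in
  obtain ⟨N, hN⟩ := exists_nat_ge ((d : ℝ) / ε)
  obtain ⟨C, hC, hsweep⟩ := exists_isTowerBase_measure_compl_sweep_eq_zero hT hap N
  have hcover : 1 ≤ d * μ (base T C d) + d * μ C := by
    rw [prob_compl_eq_zero_iff (measurableSet_sweep hT.measurable hC.1)] at hsweep
    exact hsweep ▸ measure_sweep_le hT hC.1 hd
  have hsmall : N * μ C ≤ 1 := measure_univ (μ := μ) ▸ hC.natCast_mul_measure_le hT
  refine ⟨base T C d, measurableSet_base hT.measurable hC.1 d, fun i j hi hj hij => ?_,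
    ofReal_one_sub_div_le (measure_ne_top _ _) (measure_ne_top _ _) hd hε hN hcover hsmall⟩
  exact disjoint_preimage_iterate_of_disjoint_preimage_iterate
    (fun m hm hmd => disjoint_base_preimage_iterate hm hmd) hi hj hij
end

section
/- Let T: Ω → Ω be countable piecewise monotone on Ω ⊆ ℝ with countable partition M into monotony intervals, and let P be a countable partition of Ω into intervals. Then for every d ∈ ℕ, the partition (⋁_{k=1}^{d-1} T^{-k}(P)) ∨ (⋁_{k=0}^{d-2} T^{-k}(M)) is a partition of Ω into intervals. -/
open MeasureTheory Real Filter
open scoped symmDiff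

lemma interval_inter' {Ω A B : Set ℝ} (hA : IsIntervalIn Ω A) (hB : IsIntervalIn Ω B) :
    IsIntervalIn Ω (A ∩ B) :=
  ⟨fun _ hx => hA.1 hx.1, fun x hx z hz y hy hxy hyz =>
    ⟨hA.2 x hx.1 z hz.1 y hy hxy hyz, hB.2 x hx.2 z hz.2 y hy hxy hyz⟩⟩

lemma interval_pullback' {Ω : Set ℝ} {T : ℝ → ℝ} (hmaps : Set.MapsTo T Ω Ω)
    {Mi B : Set ℝ} (hMi : IsIntervalIn Ω Mi)
    (hmono : MonotoneOn T Mi ∨ StrictAntiOn T Mi) (hB : IsIntervalIn Ω B) :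
    IsIntervalIn Ω (Mi ∩ T ⁻¹' B) := by
  constructor
  · exact fun x hx => hMi.1 hx.1
  · intro x hx z hz y hy hxy hyz
    have hyM : y ∈ Mi := hMi.2 x hx.1 z hz.1 y hy hxy hyz
    refine ⟨hyM, ?_⟩
    have hTy : T y ∈ Ω := hmaps hy
    rcases hmono with h | h
    · exact hB.2 _ hx.2 _ hz.2 _ hTy (h hx.1 hyM hxy) (h hyM hz.1 hyz)
    · exact hB.2 _ hz.2 _ hx.2 _ hTy (h.antitoneOn hyM hz.1 hyz) (h.antitoneOn hx.1 hyM hxy)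

lemma cell_interval' (Ω : Set ℝ) (T : ℝ → ℝ) (hmaps : Set.MapsTo T Ω Ω)
    (M : ℕ → Set ℝ) (hM : IsMonotonyPartition Ω T M)
    (P : ℕ → Set ℝ) (hPint : ∀ j, IsIntervalIn Ω (P j)) :
    ∀ n (a b : Fin n → ℕ),
      IsIntervalIn Ω (Ω ∩ (⋂ k : Fin n, T^[(k : ℕ) + 1] ⁻¹' P (a k)) ∩
        (⋂ k : Fin n, T^[(k : ℕ)] ⁻¹' M (b k))) := by
  intro n
  induction n with
  | zero =>
      intro a b
      simp only [Set.iInter_of_empty, Set.inter_univ]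
      exact ⟨subset_rfl, fun _ _ _ _ y hy _ _ => hy⟩
  | succ n ih =>
      intro a b
      have key : Ω ∩ (⋂ k : Fin (n + 1), T^[(k : ℕ) + 1] ⁻¹' P (a k)) ∩
          (⋂ k : Fin (n + 1), T^[(k : ℕ)] ⁻¹' M (b k)) =
          M (b 0) ∩ T ⁻¹' (P (a 0) ∩
            (Ω ∩ (⋂ k : Fin n, T^[(k : ℕ) + 1] ⁻¹' P (a k.succ)) ∩
              (⋂ k : Fin n, T^[(k : ℕ)] ⁻¹' M (b k.succ)))) := by
        ext x
        simp only [Set.mem_inter_iff, Set.mem_preimage, Set.mem_iInter, Fin.forall_fin_succ,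
          Fin.val_succ, Fin.val_zero, Function.iterate_zero_apply]
        constructor
        · rintro ⟨⟨hΩ, h0P, hkP⟩, h0M, hkM⟩
          refine ⟨h0M, ?_, ⟨hmaps hΩ, fun k => ?_⟩, fun k => ?_⟩
          · simpa using h0P
          · have := hkP k
            rwa [show (k : ℕ) + 1 + 1 = ((k : ℕ) + 1) + 1 from rfl,
              Function.iterate_succ_apply] at this
          · have := hkM k
            rwa [Function.iterate_succ_apply] at this
        · rintro ⟨h0M, h0P, ⟨hTΩ, hkP⟩, hkM⟩
          have hΩ : x ∈ Ω := (hM.2 (b 0)).1.1 h0M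
          refine ⟨⟨hΩ, by simpa using h0P, fun k => ?_⟩, h0M, fun k => ?_⟩
          · have := hkP k
            rwa [← Function.iterate_succ_apply] at this
          · have := hkM k
            rwa [← Function.iterate_succ_apply] at this
      rw [key]
      exact interval_pullback' hmaps (hM.2 (b 0)).1 (hM.2 (b 0)).2
        (interval_inter' (hPint (a 0)) (ih _ _))

theorem stmt7 (Ω : Set ℝ) (T : ℝ → ℝ) (hmaps : Set.MapsTo T Ω Ω)
    (M : ℕ → Set ℝ) (hM : IsMonotonyPartition Ω T M)
    (P : ℕ → Set ℝ) (hP : IsPartitionOf Ω P) (hPint : ∀ j, IsIntervalIn Ω (P j))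
    (d : ℕ) (hd : 1 ≤ d) :
    ∀ C : (Fin (d - 1) → ℕ) × (Fin (d - 1) → ℕ) → Set ℝ,
      C = (fun ab => Ω ∩ (⋂ k : Fin (d - 1), T^[(k : ℕ) + 1] ⁻¹' P (ab.1 k)) ∩
        (⋂ k : Fin (d - 1), T^[(k : ℕ)] ⁻¹' M (ab.2 k))) →
      (Pairwise fun p q => Disjoint (C p) (C q)) ∧ (⋃ p, C p) = Ω ∧
        (∀ p, IsIntervalIn Ω (C p)) := by
  intro C hC
  subst hC
  refine ⟨?_, ?_, fun p => cell_interval' Ω T hmaps M hM P hPint _ p.1 p.2⟩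
  · intro p q hpq
    rw [Set.disjoint_left]
    intro x hxp hxq
    by_cases h1 : p.1 = q.1
    · have h2 : p.2 ≠ q.2 := fun h2 => hpq (Prod.ext h1 h2)
      obtain ⟨k, hk⟩ := Function.ne_iff.mp h2
      exact Set.disjoint_left.mp (hM.1.1 hk) (Set.mem_iInter.mp hxp.2 k)
        (Set.mem_iInter.mp hxq.2 k)
    · obtain ⟨k, hk⟩ := Function.ne_iff.mp h1
      exact Set.disjoint_left.mp (hP.1 hk) (Set.mem_iInter.mp hxp.1.2 k)
        (Set.mem_iInter.mp hxq.1.2 k)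
  · ext ω
    constructor
    · rintro hω
      obtain ⟨p, hp⟩ := Set.mem_iUnion.mp hω
      exact hp.1.1
    · intro hω
      have hPmem : ∀ k : Fin (d - 1), ∃ i, T^[(k : ℕ) + 1] ω ∈ P i := by
        intro k
        have : T^[(k : ℕ) + 1] ω ∈ Ω := hmaps.iterate _ hω
        rw [← hP.2] at this
        exact Set.mem_iUnion.mp this
      have hMmem : ∀ k : Fin (d - 1), ∃ i, T^[(k : ℕ)] ω ∈ M i := by
        intro k
        have : T^[(k : ℕ)] ω ∈ Ω := hmaps.iterate _ hω
        rw [← hM.1.2] at this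
        exact Set.mem_iUnion.mp this
      choose a ha using hPmem
      choose b hb using hMmem
      exact Set.mem_iUnion.mpr ⟨(a, b), ⟨hω, Set.mem_iInter.mpr ha⟩, Set.mem_iInter.mpr hb⟩
end

section
/- Let (Ω, B(Ω), μ, T) be a measure-preserving dynamical system with Ω ⊆ ℝ a compact metric space, T aperiodic and countable piecewise monotone with partition M into monotony intervals. Then for all ε > 0 and d ∈ ℕ there exists a countable partition Q = {Q_j}_{j∈J} of Ω into intervals and an index set J̃ ⊆ J such that: (i) Q consists of countably many intervals; (ii) Q_j ∩ T^{-k}(Q_j) = ∅ for all k ∈ {1,...,d-1} and j ∈ J̃; (iii) if H(M) < ∞ then H(Q) < ∞; (iv) μ(⋃_{j∈J̃} Q_j) ≥ 1 - ε. -/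
open MeasureTheory Real Filter
open scoped symmDiff

/-!
Aperiodicity gives `δ > 0` such that, up to measure `ε`, every point is moved by at least `δ` by
each of `T, …, T^[d-1]`. Sort these points by their itinerary through the monotony intervals for
`d` steps, by a grid cell of length `δ`, and by the direction of each displacement. On the
order-convex hull of one class every such iterate is monotone or antitone and moves the class by
at least `δ` in one direction, so it maps the hull off itself. Finitely many classes carry measure
`> 1 - ε`; the common refinement of their hulls is a finite partition into intervals, hence of
finite entropy, and the cells inside the hulls form `Jt`.
-/

open Set

section SideOf

variable {α ι : Type*} [Preorder α]

open Classical in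
noncomputable def sideOf (s : Set α) (x : α) : Fin 3 :=
  if x ∉ upperClosure s then 0 else if x ∈ lowerClosure s then 1 else 2

lemma sideOf_eq_one_iff {s : Set α} {x : α} :
    sideOf s x = 1 ↔ x ∈ upperClosure s ∧ x ∈ lowerClosure s := by
  unfold sideOf
  split_ifs <;> simp_all

lemma sideOf_of_mem {s : Set α} {x : α} (hx : x ∈ s) : sideOf s x = 1 :=
  sideOf_eq_one_iff.2 ⟨subset_upperClosure hx, subset_lowerClosure hx⟩

lemma monotone_sideOf (s : Set α) : Monotone (sideOf s) := by
  intro x y hxy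
  have hup := (upperClosure s).upper hxy
  have hlow := (lowerClosure s).lower hxy
  unfold sideOf
  split_ifs <;> first | decide | tauto

def sideCell (s : ι → Set α) (c : ι → Fin 3) : Set α :=
  (fun x i => sideOf (s i) x) ⁻¹' {c}

lemma ordConnected_sideCell (s : ι → Set α) (c : ι → Fin 3) : (sideCell s c).OrdConnected :=
  ordConnected_singleton.preimage_mono (monotone_lam fun i => monotone_sideOf (s i))

lemma pairwise_disjoint_sideCell (s : ι → Set α) :
    Pairwise fun c c' => Disjoint (sideCell s c) (sideCell s c') :=
  pairwise_disjoint_fiber _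

lemma iUnion_sideCell (s : ι → Set α) : ⋃ c, sideCell s c = univ :=
  eq_univ_of_forall fun _ => mem_iUnion.2 ⟨_, rfl⟩

lemma sideCell_subset {s : ι → Set α} {c : ι → Fin 3} {i : ι} (hc : c i = 1) :
    sideCell s c ⊆ (upperClosure (s i) : Set α) ∩ lowerClosure (s i) := fun _ hx =>
  sideOf_eq_one_iff.1 (hc ▸ congrFun hx i)

end SideOf

lemma Set.OrdConnected.isIntervalIn_inter {I : Set ℝ} (hI : I.OrdConnected) (Ω : Set ℝ) :
    IsIntervalIn Ω (I ∩ Ω) :=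
  ⟨inter_subset_right, fun _ hx _ hz _ hy hxy hyz => ⟨hI.out hx.1 hz.1 ⟨hxy, hyz⟩, hy⟩⟩

lemma IsPartitionOf.subset {Ω : Set ℝ} {ι : Type*} {Q : ι → Set ℝ} (hQ : IsPartitionOf Ω Q)
    (i : ι) : Q i ⊆ Ω :=
  hQ.2 ▸ subset_iUnion Q i

theorem exists_intervalPartition_refining {ι : Type*} [Finite ι] (Ω : Set ℝ) (s : ι → Set ℝ) :
    ∃ (Q : ℕ → Set ℝ) (J : Set ℕ), IsPartitionOf Ω Q ∧ (∀ j, IsIntervalIn Ω (Q j)) ∧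
      {j | (Q j).Nonempty}.Finite ∧
      (∀ j ∈ J, ∃ i, Q j ⊆ (upperClosure (s i) : Set ℝ) ∩ lowerClosure (s i)) ∧
      (⋃ i, s i) ∩ Ω ⊆ ⋃ j ∈ J, Q j := by
  have := Encodable.ofCountable (ι → Fin 3)
  set P : (ι → Fin 3) → Set ℝ := fun c => sideCell s c ∩ Ω
  have hP_encode (c : ι → Fin 3) : ⋃ b ∈ Encodable.decode₂ _ (Encodable.encode c), P b = P c := by
    simp
  refine ⟨fun n => ⋃ b ∈ Encodable.decode₂ _ n, P b,
    Encodable.encode '' {c : ι → Fin 3 | ∃ i, c i = 1}, ⟨?_, ?_⟩, fun j => ?_, ?_, ?_, ?_⟩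
  · exact Encodable.iUnion_decode₂_disjoint_on fun c c' hcc' =>
      ((pairwise_disjoint_sideCell s) hcc').mono inter_subset_left inter_subset_left
  · rw [Encodable.iUnion_decode₂, ← iUnion_inter, iUnion_sideCell, univ_inter]
  · exact Encodable.iUnion_decode₂_cases (C := IsIntervalIn Ω) (⟨empty_subset _, by simp⟩)
      fun c => (ordConnected_sideCell s c).isIntervalIn_inter Ω
  · refine (finite_range (Encodable.encode (α := ι → Fin 3))).subset fun n hn => ?_
    obtain ⟨c, hc, -⟩ := mem_iUnion₂.1 hn.some_mem
    exact ⟨c, Encodable.mem_decode₂.1 hc⟩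
  · rintro _ ⟨c, ⟨i, hi⟩, rfl⟩
    exact ⟨i, (hP_encode c).subset.trans (inter_subset_left.trans (sideCell_subset hi))⟩
  · rintro x ⟨hx, hxΩ⟩
    obtain ⟨i, hxi⟩ := mem_iUnion.1 hx
    refine mem_biUnion (x := Encodable.encode fun i => sideOf (s i) x)
      ⟨_, ⟨i, show sideOf (s i) x = 1 from sideOf_of_mem hxi⟩, rfl⟩ ?_
    rw [hP_encode]
    exact ⟨rfl, hxΩ⟩

lemma exists_finset_lt_measure_biUnion {α ι : Type*} [MeasurableSpace α] {μ : Measure α}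
    [Countable ι] (s : ι → Set α) {t : ENNReal} (ht : t < μ (⋃ i, s i)) :
    ∃ u : Finset ι, t < μ (⋃ i ∈ u, s i) := by
  have hmono : Monotone fun u : Finset ι => ⋃ i ∈ u, s i := fun _ _ h =>
    biUnion_subset_biUnion_left h
  rw [iUnion_eq_iUnion_finset, hmono.directed_le.measure_iUnion] at ht
  exact lt_iSup_iff.1 ht

section Dynamics

variable {Ω : Set ℝ} {T : ℝ → ℝ} {M : ℕ → Set ℝ}

lemma IsIntervalIn.mem_of_mem_uIcc {A : Set ℝ} (hA : IsIntervalIn Ω A) {x y z : ℝ}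
    (hx : x ∈ A) (hz : z ∈ A) (hy : y ∈ Ω) (hyxz : y ∈ uIcc x z) : y ∈ A := by
  rcases mem_uIcc.1 hyxz with ⟨hxy, hyz⟩ | ⟨hzy, hyx⟩
  exacts [hA.2 x hx z hz y hy hxy hyz, hA.2 z hz x hx y hy hzy hyx]

lemma apply_mem_uIcc_of_monotoneOn_or_antitoneOn {f : ℝ → ℝ} {s : Set ℝ}
    (hf : MonotoneOn f s ∨ AntitoneOn f s) {x y z : ℝ} (hx : x ∈ s) (hy : y ∈ s) (hz : z ∈ s)
    (hyxz : y ∈ uIcc x z) : f y ∈ uIcc (f x) (f z) := by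
  rcases hf with hf | hf <;> rcases mem_uIcc.1 hyxz with ⟨hxy, hyz⟩ | ⟨hzy, hyx⟩
  · exact mem_uIcc.2 (Or.inl ⟨hf hx hy hxy, hf hy hz hyz⟩)
  · exact mem_uIcc.2 (Or.inr ⟨hf hz hy hzy, hf hy hx hyx⟩)
  · exact mem_uIcc.2 (Or.inr ⟨hf hy hz hyz, hf hx hy hxy⟩)
  · exact mem_uIcc.2 (Or.inl ⟨hf hy hx hyx, hf hz hy hzy⟩)

lemma iterate_mem_uIcc_of_mem_multiCell (hM : IsMonotonyPartition Ω T M)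
    (hmaps : MapsTo T Ω Ω) {n : ℕ} {a : Fin n → ℕ} {g g' x : ℝ}
    (hg : g ∈ multiCell T M n a) (hg' : g' ∈ multiCell T M n a) (hx : x ∈ Ω)
    (hxg : x ∈ uIcc g g') {k : ℕ} (hk : k ≤ n) : T^[k] x ∈ uIcc (T^[k] g) (T^[k] g') := by
  induction k with
  | zero => exact hxg
  | succ k ih =>
    have hgk : T^[k] g ∈ M (a ⟨k, hk⟩) := mem_iInter.1 hg ⟨k, hk⟩
    have hg'k : T^[k] g' ∈ M (a ⟨k, hk⟩) := mem_iInter.1 hg' ⟨k, hk⟩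
    have hxk := (hM.2 _).1.mem_of_mem_uIcc hgk hg'k (hmaps.iterate k hx) (ih (by omega))
    have hmono := (hM.2 (a ⟨k, hk⟩)).2.imp id StrictAntiOn.antitoneOn
    simpa only [Function.iterate_succ_apply'] using
      apply_mem_uIcc_of_monotoneOn_or_antitoneOn hmono hgk hxk hg'k (ih (by omega))

def displacedSet (Ω : Set ℝ) (T : ℝ → ℝ) (d : ℕ) (δ : ℝ) : Set ℝ :=
  {ω ∈ Ω | ∀ k, 1 ≤ k → k < d → δ ≤ |T^[k] ω - ω|}

lemma displacedSet_antitone (Ω : Set ℝ) (T : ℝ → ℝ) (d : ℕ) : Antitone (displacedSet Ω T d) :=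
  fun _ _ hδ _ hω => ⟨hω.1, fun k hk hkd => hδ.trans (hω.2 k hk hkd)⟩

lemma diff_periodic_subset_iUnion_displacedSet (Ω : Set ℝ) (T : ℝ → ℝ) (d : ℕ) :
    Ω \ {ω | ∃ t, 1 ≤ t ∧ T^[t] ω = ω} ⊆ ⋃ n : ℕ, displacedSet Ω T d (1 / (n + 1)) := by
  rintro ω ⟨hω, hper⟩
  have hpos : ∀ k ∈ Finset.Ico 1 d, 0 < |T^[k] ω - ω| := fun k hk =>
    abs_pos.2 (sub_ne_zero.2 fun h => hper ⟨k, (Finset.mem_Ico.1 hk).1, h⟩)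
  have hev : ∀ᶠ n : ℕ in atTop, ∀ k ∈ Finset.Ico 1 d, 1 / ((n : ℝ) + 1) ≤ |T^[k] ω - ω| :=
    (Filter.eventually_all_finset _).2 fun k hk =>
      (tendsto_one_div_add_atTop_nhds_zero_nat.eventually (gt_mem_nhds (hpos k hk))).mono
        fun _ h => h.le
  obtain ⟨n, hn⟩ := hev.exists
  exact mem_iUnion.2 ⟨n, hω, fun k hk hkd => hn k (Finset.mem_Ico.2 ⟨hk, hkd⟩)⟩

lemma exists_lt_measure_displacedSet {μ : Measure ℝ} (hΩ : μ Ω = 1) (hap : Aperiodic μ T)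
    (d : ℕ) {t : ENNReal} (ht : t < 1) : ∃ δ > 0, t < μ (displacedSet Ω T d δ) := by
  have hmono : Monotone fun n : ℕ => displacedSet Ω T d (1 / (n + 1)) := fun _ _ h =>
    displacedSet_antitone Ω T d (Nat.one_div_le_one_div h)
  have hcover : 1 ≤ ⨆ n : ℕ, μ (displacedSet Ω T d (1 / (n + 1))) :=
    calc 1 = μ (Ω \ {ω | ∃ t, 1 ≤ t ∧ T^[t] ω = ω}) := by rw [measure_sdiff_null hap, hΩ]
      _ ≤ μ (⋃ n : ℕ, displacedSet Ω T d (1 / (n + 1))) :=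
        measure_mono (diff_periodic_subset_iUnion_displacedSet Ω T d)
      _ = _ := hmono.measure_iUnion
  obtain ⟨n, hn⟩ := lt_iSup_iff.1 (ht.trans_le hcover)
  exact ⟨1 / (n + 1), by positivity, hn⟩

/-- The points of the displaced set with prescribed itinerary `p.1` through the monotony
intervals, grid cell `[p.2.1 δ, p.2.1 δ + δ)`, and direction `p.2.2 k` of the `k`-th
displacement. -/
def codedSet (Ω : Set ℝ) (T : ℝ → ℝ) (M : ℕ → Set ℝ) (d : ℕ) (δ : ℝ)
    (p : (Fin d → ℕ) × ℤ × (Fin d → Bool)) : Set ℝ :=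
  {g ∈ displacedSet Ω T d δ | g ∈ multiCell T M d p.1 ∧ ⌊g / δ⌋ = p.2.1 ∧
    ∀ k : Fin d, p.2.2 k = decide (g + δ ≤ T^[k] g)}

lemma displacedSet_subset_iUnion_codedSet (hM : IsMonotonyPartition Ω T M)
    (hmaps : MapsTo T Ω Ω) (d : ℕ) (δ : ℝ) :
    displacedSet Ω T d δ ⊆ ⋃ p, codedSet Ω T M d δ p := by
  intro g hg
  have hitin (k : Fin d) : ∃ i, T^[k] g ∈ M i := mem_iUnion.1 (hM.1.2 ▸ hmaps.iterate k hg.1)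
  choose a ha using hitin
  exact mem_iUnion.2 ⟨(a, ⌊g / δ⌋, fun k => decide (g + δ ≤ T^[k] g)),
    hg, mem_iInter.2 ha, rfl, fun _ => rfl⟩

lemma mem_Ico_of_mem_codedSet {d : ℕ} {δ : ℝ} (hδ : 0 < δ) {a : Fin d → ℕ} {i : ℤ}
    {up : Fin d → Bool} {g : ℝ} (hg : g ∈ codedSet Ω T M d δ (a, i, up)) :
    i * δ ≤ g ∧ g < i * δ + δ := by
  obtain ⟨h₁, h₂⟩ := Int.floor_eq_iff.1 hg.2.2.1
  exact ⟨(le_div_iff₀ hδ).1 h₁, by linarith [(div_lt_iff₀ hδ).1 h₂]⟩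

lemma displacement_of_mem_codedSet {d : ℕ} {δ : ℝ} {a : Fin d → ℕ} {i : ℤ}
    {up : Fin d → Bool} {g : ℝ} (hg : g ∈ codedSet Ω T M d δ (a, i, up)) (k : Fin d)
    (hk : 1 ≤ (k : ℕ)) :
    (up k = true → g + δ ≤ T^[k] g) ∧ (up k = false → T^[k] g + δ ≤ g) := by
  have hdir : up k = decide (g + δ ≤ T^[k] g) := hg.2.2.2 k
  have habs := hg.1.2 k hk k.2
  refine ⟨fun h => by simpa [h] using hdir.symm, fun h => ?_⟩
  rw [h, eq_comm, decide_eq_false_iff_not] at hdir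
  rcases le_abs'.1 habs with h' | h' <;> linarith

/-- A coded set has diameter `< δ`, and each `T^[k]` with `1 ≤ k < d` is monotone or antitone on
its hull and moves all of its points by at least `δ` in one common direction. -/
lemma iterate_notMem_hull_codedSet (hM : IsMonotonyPartition Ω T M) (hmaps : MapsTo T Ω Ω)
    {d : ℕ} {δ : ℝ} (hδ : 0 < δ) (p : (Fin d → ℕ) × ℤ × (Fin d → Bool)) {k : ℕ} (hk : 1 ≤ k)
    (hkd : k < d) {x : ℝ} (hxΩ : x ∈ Ω)
    (hx : x ∈ (upperClosure (codedSet Ω T M d δ p) : Set ℝ) ∩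
      lowerClosure (codedSet Ω T M d δ p)) :
    T^[k] x ∉ (upperClosure (codedSet Ω T M d δ p) : Set ℝ) ∩
      lowerClosure (codedSet Ω T M d δ p) := by
  obtain ⟨a, i, up⟩ := p
  rintro ⟨hTxu, hTxl⟩
  obtain ⟨g, hg, hgx⟩ := mem_upperClosure.1 hx.1
  obtain ⟨g', hg', hxg'⟩ := mem_lowerClosure.1 hx.2
  obtain ⟨h, hh, hhTx⟩ := mem_upperClosure.1 hTxu
  obtain ⟨h', hh', hTxh'⟩ := mem_lowerClosure.1 hTxl
  have hTx := iterate_mem_uIcc_of_mem_multiCell hM hmaps hg.2.1 hg'.2.1 hxΩ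
    (mem_uIcc_of_le hgx hxg') hkd.le
  have hgδ := mem_Ico_of_mem_codedSet hδ hg
  have hg'δ := mem_Ico_of_mem_codedSet hδ hg'
  have hhδ := mem_Ico_of_mem_codedSet hδ hh
  have hh'δ := mem_Ico_of_mem_codedSet hδ hh'
  cases hup : up ⟨k, hkd⟩
  · have hgk := (displacement_of_mem_codedSet hg ⟨k, hkd⟩ hk).2 hup
    have hg'k := (displacement_of_mem_codedSet hg' ⟨k, hkd⟩ hk).2 hup
    rcases mem_uIcc.1 hTx with ⟨h₁, h₂⟩ | ⟨h₁, h₂⟩ <;> linarith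
  · have hgk := (displacement_of_mem_codedSet hg ⟨k, hkd⟩ hk).1 hup
    have hg'k := (displacement_of_mem_codedSet hg' ⟨k, hkd⟩ hk).1 hup
    rcases mem_uIcc.1 hTx with ⟨h₁, h₂⟩ | ⟨h₁, h₂⟩ <;> linarith

end Dynamics

theorem stmt8_general (Ω : Set ℝ) (μ : Measure ℝ)
    (hΩ : μ Ω = 1) (T : ℝ → ℝ) (hmaps : Set.MapsTo T Ω Ω)
    (hap : Aperiodic μ T)
    (M : ℕ → Set ℝ) (hM : IsMonotonyPartition Ω T M)
    (ε : ℝ) (hε : 0 < ε) (d : ℕ) :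
    ∃ (Q : ℕ → Set ℝ) (Jt : Set ℕ),
      IsPartitionOf Ω Q ∧ (∀ j, IsIntervalIn Ω (Q j)) ∧
      (∀ j ∈ Jt, ∀ k, 1 ≤ k → k ≤ d - 1 → Q j ∩ T^[k] ⁻¹' Q j = ∅) ∧
      ((Summable fun i => Real.negMulLog (μ (M i)).toReal) →
        (Summable fun j => Real.negMulLog (μ (Q j)).toReal)) ∧
      ENNReal.ofReal (1 - ε) ≤ μ (⋃ j ∈ Jt, Q j) := by
  obtain ⟨δ, hδ, hδμ⟩ :=
    exists_lt_measure_displacedSet hΩ hap d (ENNReal.ofReal_lt_one.2 (show 1 - ε < 1 by linarith))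
  obtain ⟨u, hu⟩ := exists_finset_lt_measure_biUnion (codedSet Ω T M d δ)
    (hδμ.trans_le (measure_mono (displacedSet_subset_iUnion_codedSet hM hmaps d δ)))
  obtain ⟨Q, J, hQ, hQint, hQfin, hJ, hcover⟩ :=
    exists_intervalPartition_refining Ω fun p : u => codedSet Ω T M d δ p.1
  refine ⟨Q, J, hQ, hQint, fun j hj k hk hkd => ?_, fun _ => ?_, hu.le.trans (measure_mono ?_)⟩
  · obtain ⟨p, hp⟩ := hJ j hj
    refine eq_empty_of_forall_notMem fun x ⟨hxQ, hTxQ⟩ => ?_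
    exact iterate_notMem_hull_codedSet hM hmaps hδ p.1 hk (by omega) (hQ.subset j hxQ) (hp hxQ)
      (hp hTxQ)
  · refine summable_of_ne_finset_zero (s := hQfin.toFinset) fun j hj => ?_
    have hQj : Q j = ∅ := not_nonempty_iff_eq_empty.1 (by simpa using hj)
    simp [hQj]
  · intro x hx
    obtain ⟨p, hp, hxp⟩ := mem_iUnion₂.1 hx
    exact hcover ⟨mem_iUnion.2 ⟨⟨p, hp⟩, hxp⟩, hxp.1.1⟩

theorem stmt8 (Ω : Set ℝ) (hΩc : IsCompact Ω) (μ : Measure ℝ) [IsProbabilityMeasure μ]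
    (hΩ : μ Ω = 1) (T : ℝ → ℝ) (hT : MeasurePreserving T μ μ) (hmaps : Set.MapsTo T Ω Ω)
    (hap : Aperiodic μ T)
    (M : ℕ → Set ℝ) (hM : IsMonotonyPartition Ω T M)
    (ε : ℝ) (hε : 0 < ε) (d : ℕ) (hd : 0 < d) :
    ∃ (Q : ℕ → Set ℝ) (Jt : Set ℕ),
      IsPartitionOf Ω Q ∧ (∀ j, IsIntervalIn Ω (Q j)) ∧
      (∀ j ∈ Jt, ∀ k, 1 ≤ k → k ≤ d - 1 → Q j ∩ T^[k] ⁻¹' Q j = ∅) ∧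
      ((Summable fun i => Real.negMulLog (μ (M i)).toReal) →
        (Summable fun j => Real.negMulLog (μ (Q j)).toReal)) ∧
      ENNReal.ofReal (1 - ε) ≤ μ (⋃ j ∈ Jt, Q j) :=
  stmt8_general Ω μ hΩ T hmaps hap M hM ε hε d
end

section
/- Let A_1, ..., A_n be pairwise disjoint Borel sets in Ω, let B be a Borel set with B ∩ T^{-k}(B) = ∅ for k = 1,...,d-1, and suppose μ((⋃ A_i) △ B) ≤ ε' where T preserves μ. Define Â_i = A_i \ (⋃_{k=1}^{d-1} ⋃_{j=1}^n T^{-k}(A_j)). Then μ((⋃_{i=1}^n A_i) \ (⋃_{i=1}^n Â_i)) ≤ 2(d-1)·ε'. -/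
open MeasureTheory Real Filter
open scoped symmDiff

theorem stmt17 {α : Type*} [MeasurableSpace α] (μ : Measure α) [IsProbabilityMeasure μ]
    (T : α → α) (hT : MeasurePreserving T μ μ)
    (n d : ℕ) (A : Fin n → Set α) (hAm : ∀ i, MeasurableSet (A i))
    (hAd : Pairwise fun i j => Disjoint (A i) (A j))
    (B : Set α) (hBm : MeasurableSet B)
    (hB : ∀ k, 1 ≤ k → k ≤ d - 1 → B ∩ T^[k] ⁻¹' B = ∅)
    (ε' : ENNReal) (hεB : μ ((⋃ i, A i) ∆ B) ≤ ε') :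
    μ ((⋃ i, A i) \
        ⋃ i, (A i \ ⋃ k ∈ Finset.Icc 1 (d - 1), ⋃ j, T^[k] ⁻¹' A j)) ≤
      2 * ((d - 1 : ℕ) : ENNReal) * ε' :=  by
  set U := ⋃ i, A i with hU
  have hUm : MeasurableSet U := MeasurableSet.iUnion hAm
  have hsub : (U \
      ⋃ i, (A i \ ⋃ k ∈ Finset.Icc 1 (d - 1), ⋃ j, T^[k] ⁻¹' A j)) ⊆
      ⋃ k ∈ Finset.Icc 1 (d-1), ((U \ B) ∪ T^[k] ⁻¹' (U \ B)) := by
    intro x hx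
    obtain ⟨hxU, hx2⟩ := hx
    obtain ⟨i, hi⟩ := Set.mem_iUnion.mp hxU
    have hxC : x ∈ ⋃ k ∈ Finset.Icc 1 (d-1), ⋃ j, T^[k] ⁻¹' A j := by
      by_contra h; exact hx2 (Set.mem_iUnion.mpr ⟨i, ⟨hi, h⟩⟩)
    simp only [Set.mem_iUnion] at hxC
    obtain ⟨k, hk, j, hj⟩ := hxC
    refine Set.mem_iUnion.mpr ⟨k, Set.mem_iUnion.mpr ⟨hk, ?_⟩⟩
    have hTx : T^[k] x ∈ U := Set.mem_iUnion.mpr ⟨j, hj⟩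
    by_cases hxB : x ∈ B
    · by_cases hTB : T^[k] x ∈ B
      · exfalso
        have := hB k (Finset.mem_Icc.mp hk).1 (Finset.mem_Icc.mp hk).2
        exact Set.eq_empty_iff_forall_notMem.mp this x ⟨hxB, hTB⟩
      · exact Or.inr ⟨hTx, hTB⟩
    · exact Or.inl ⟨hxU, hxB⟩
  have h1 : μ (U \ B) ≤ ε' :=
    le_trans (measure_mono fun x hx => Set.mem_symmDiff.mpr (Or.inl ⟨hx.1, hx.2⟩)) hεB
  calc μ (U \ ⋃ i, (A i \ ⋃ k ∈ Finset.Icc 1 (d - 1), ⋃ j, T^[k] ⁻¹' A j))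
      ≤ μ (⋃ k ∈ Finset.Icc 1 (d-1), ((U \ B) ∪ T^[k] ⁻¹' (U \ B))) := measure_mono hsub
    _ ≤ ∑ k ∈ Finset.Icc 1 (d-1), μ ((U \ B) ∪ T^[k] ⁻¹' (U \ B)) :=
        measure_biUnion_finset_le _ _
    _ ≤ ∑ _k ∈ Finset.Icc 1 (d-1), 2 * ε' := by
        refine Finset.sum_le_sum fun k _ => ?_
        have h2 : μ (T^[k] ⁻¹' (U \ B)) = μ (U \ B) :=
          (hT.iterate k).measure_preimage (hUm.diff hBm).nullMeasurableSet
        calc μ ((U \ B) ∪ T^[k] ⁻¹' (U \ B)) ≤ μ (U \ B) + μ (T^[k] ⁻¹' (U \ B)) :=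
              measure_union_le _ _
          _ = μ (U \ B) + μ (U \ B) := by rw [h2]
          _ ≤ ε' + ε' := add_le_add h1 h1
          _ = 2 * ε' := (two_mul ε').symm
    _ = ((d-1 : ℕ) : ENNReal) * (2 * ε') := by
        rw [Finset.sum_const, Nat.card_Icc]; simp [nsmul_eq_mul]
    _ = 2 * ((d - 1 : ℕ) : ENNReal) * ε' := by ring
end
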